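/- Suppose η_1 = η_2 (a = 0). If y(0) = max{|x_1(0) - (λ_1 - μ_1)/λ_1|, x_2(0)} ≤ (λ_1 - μ_1)/(32(λ_1 + λ_2)), then for all t ≥ 0 the second component satisfies (1/2) x_2(0) e^{-t(λ_1 - μ_1)} ≤ x_2(t) ≤ 2 x_2(0) e^{-t(λ_1 - μ_1)}. -/

import Mathlib

/-!
When `η₁ = η₂`, i.e. `λ₁μ₂ - λ₂μ₁ = λ₁(λ₁ - μ₁)`, the per-capita growth rates satisfy
`λ₁ x₂'/x₂ - λ₂ x₁'/x₁ = -λ₁(λ₁ - μ₁)`, so that exactly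
`x₂(t) = x₂(0) e^{-(λ₁-μ₁)t} (x₁(t)/x₁(0))^{λ₂/λ₁}`.
It therefore suffices to keep `x₁` in the band `|x₁ - (λ₁-μ₁)/λ₁| ≤ δ := (λ₁-μ₁)/(8(λ₁+λ₂))`,
on which the last factor lies in `[1/2, 2]`: its logarithm is at most `3λ₂/(8(λ₁+λ₂)) < log 2`.
The band is invariant: on its boundary the same identity gives `x₂ ≤ δ/2`, and then
`x₁' = -λ₁ x₁ (x₁ - (λ₁-μ₁)/λ₁ + x₂)` points into the band.
-/

open Real

theorem eq_mul_exp_integral_of_hasDerivAt {x g : ℝ → ℝ} (hg : Continuous g)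
    (hx : ∀ t, HasDerivAt x (g t * x t) t) (t : ℝ) :
    x t = x 0 * exp (∫ s in (0 : ℝ)..t, g s) := by
  set G : ℝ → ℝ := fun w => ∫ s in (0 : ℝ)..w, g s
  have hG : ∀ s, HasDerivAt G (g s) s := fun s =>
    intervalIntegral.integral_hasDerivAt_right (hg.intervalIntegrable _ _)
      (hg.stronglyMeasurableAtFilter _ _) hg.continuousAt
  have hderiv : ∀ s, HasDerivAt (fun w => x w * exp (-G w)) 0 s := fun s =>
    ((hx s).mul (hG s).neg.exp).congr_deriv (by ring)
  have hconst := is_const_of_deriv_eq_zero (fun s => (hderiv s).differentiableAt)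
    (fun s => (hderiv s).deriv) t 0
  simp only [G, intervalIntegral.integral_same, neg_zero, exp_zero, mul_one] at hconst
  rw [← hconst, mul_assoc, ← exp_add, neg_add_cancel, exp_zero, mul_one]

theorem div_le_one_add_of_abs_sub_le {a b c δ : ℝ} (hc : 0 < c) (hδ : 3 * δ ≤ c)
    (ha : |a - c| ≤ δ) (hb : |b - c| ≤ δ) : a / b ≤ 1 + 3 * δ / c := by
  rw [abs_le] at ha hb
  have hδ0 : 0 ≤ δ := by linarith
  set k := 3 * δ / c
  have hkc : k * c = 3 * δ := div_mul_cancel₀ _ hc.ne'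
  have hk1 : k ≤ 1 := (div_le_one hc).2 hδ
  have hk0 : 0 ≤ k := by positivity
  rw [div_le_iff₀ (by linarith)]
  nlinarith [mul_le_mul_of_nonneg_left hb.1 (by linarith : 0 ≤ 1 + k),
    mul_le_mul_of_nonneg_right hk1 hδ0]

theorem abs_log_le_of_le_one_add {r η : ℝ} (hr : 0 < r) (h : r ≤ 1 + η) (h' : r⁻¹ ≤ 1 + η) :
    |log r| ≤ η := by
  rw [abs_le]
  constructor
  · have := log_le_sub_one_of_pos (inv_pos.2 hr)
    rw [log_inv] at this
    linarith
  · linarith [log_le_sub_one_of_pos hr]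

theorem abs_log_div_le_of_abs_sub_le {a b c δ : ℝ} (hc : 0 < c) (hδ : 3 * δ ≤ c)
    (ha : |a - c| ≤ δ) (hb : |b - c| ≤ δ) : |log (a / b)| ≤ 3 * δ / c := by
  have hpos : ∀ {y}, |y - c| ≤ δ → 0 < y := fun hy => by linarith [(abs_le.1 hy).1]
  refine abs_log_le_of_le_one_add (div_pos (hpos ha) (hpos hb))
    (div_le_one_add_of_abs_sub_le hc hδ ha hb) ?_
  rw [inv_div]
  exact div_le_one_add_of_abs_sub_le hc hδ hb ha

theorem inv_le_exp_and_exp_le_of_abs_le_log {x c : ℝ} (hc : 0 < c) (hx : |x| ≤ log c) :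
    c⁻¹ ≤ exp x ∧ exp x ≤ c := by
  rw [abs_le] at hx
  constructor
  · rw [← exp_log (inv_pos.2 hc), log_inv]
    exact exp_le_exp.2 hx.1
  · rw [← exp_log hc]
    exact exp_le_exp.2 hx.2

structure IsSISCompetitionSolution (lam1 lam2 mu1 mu2 : ℝ) (x1 x2 : ℝ → ℝ) : Prop where
  hasDerivAt_fst : ∀ t, HasDerivAt x1 (lam1 * x1 t * (1 - x1 t - x2 t) - mu1 * x1 t) t
  hasDerivAt_snd : ∀ t, HasDerivAt x2 (lam2 * x2 t * (1 - x1 t - x2 t) - mu2 * x2 t) t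

namespace IsSISCompetitionSolution

variable {lam1 lam2 mu1 mu2 : ℝ} {x1 x2 : ℝ → ℝ}

theorem continuous_fst (h : IsSISCompetitionSolution lam1 lam2 mu1 mu2 x1 x2) :
    Continuous x1 :=
  continuous_iff_continuousAt.2 fun t => (h.hasDerivAt_fst t).continuousAt

theorem continuous_snd (h : IsSISCompetitionSolution lam1 lam2 mu1 mu2 x1 x2) :
    Continuous x2 :=
  continuous_iff_continuousAt.2 fun t => (h.hasDerivAt_snd t).continuousAt

theorem fst_eq_mul_exp_integral (h : IsSISCompetitionSolution lam1 lam2 mu1 mu2 x1 x2)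
    (t : ℝ) :
    x1 t = x1 0 * exp (∫ s in (0 : ℝ)..t, (lam1 * (1 - x1 s - x2 s) - mu1)) := by
  have := h.continuous_fst
  have := h.continuous_snd
  exact eq_mul_exp_integral_of_hasDerivAt (by fun_prop)
    (fun s => (h.hasDerivAt_fst s).congr_deriv (by ring)) t

theorem snd_eq_mul_exp_integral (h : IsSISCompetitionSolution lam1 lam2 mu1 mu2 x1 x2)
    (t : ℝ) :
    x2 t = x2 0 * exp (∫ s in (0 : ℝ)..t, (lam2 * (1 - x1 s - x2 s) - mu2)) := by
  have := h.continuous_fst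
  have := h.continuous_snd
  exact eq_mul_exp_integral_of_hasDerivAt (by fun_prop)
    (fun s => (h.hasDerivAt_snd s).congr_deriv (by ring)) t

theorem snd_eq_of_repeated_eigenvalue (h : IsSISCompetitionSolution lam1 lam2 mu1 mu2 x1 x2)
    (hlam1 : lam1 ≠ 0) (heq : lam1 - mu1 = mu2 - lam2 * mu1 / lam1) (hx10 : x1 0 ≠ 0)
    (t : ℝ) :
    x2 t = x2 0 * exp (-t * (lam1 - mu1)) * exp (lam2 / lam1 * log (x1 t / x1 0)) := by
  have := h.continuous_fst
  have := h.continuous_snd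
  have hlog : log (x1 t / x1 0) = ∫ s in (0 : ℝ)..t, (lam1 * (1 - x1 s - x2 s) - mu1) := by
    rw [h.fst_eq_mul_exp_integral t, mul_div_cancel_left₀ _ hx10, log_exp]
  have hrate : ∀ s, lam2 * (1 - x1 s - x2 s) - mu2
      = lam2 / lam1 * (lam1 * (1 - x1 s - x2 s) - mu1) - (lam1 - mu1) := fun s => by
    rw [heq]; field_simp; ring
  rw [h.snd_eq_mul_exp_integral t, hlog, mul_assoc, ← exp_add]
  simp_rw [hrate]
  rw [intervalIntegral.integral_sub (Continuous.intervalIntegrable (by fun_prop) _ _)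
    intervalIntegrable_const, intervalIntegral.integral_const_mul, intervalIntegral.integral_const]
  simp only [sub_zero, smul_eq_mul]
  ring_nf

theorem snd_bounds_of_abs_fst_sub_le (h : IsSISCompetitionSolution lam1 lam2 mu1 mu2 x1 x2)
    (hlam1 : 0 < lam1) (hlam2 : 0 ≤ lam2) (hlt : mu1 < lam1)
    (heq : lam1 - mu1 = mu2 - lam2 * mu1 / lam1) (hx20 : 0 ≤ x2 0)
    (hx10 : |x1 0 - (lam1 - mu1) / lam1| ≤ (lam1 - mu1) / (8 * (lam1 + lam2))) {t : ℝ}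
    (hx1t : |x1 t - (lam1 - mu1) / lam1| ≤ (lam1 - mu1) / (8 * (lam1 + lam2))) :
    1 / 2 * x2 0 * exp (-t * (lam1 - mu1)) ≤ x2 t ∧
      x2 t ≤ 2 * x2 0 * exp (-t * (lam1 - mu1)) := by
  have he : 0 < lam1 - mu1 := sub_pos.2 hlt
  have hA : 0 < (lam1 - mu1) / lam1 := div_pos he hlam1
  have hδ : 3 * ((lam1 - mu1) / (8 * (lam1 + lam2))) ≤ (lam1 - mu1) / lam1 := by
    rw [mul_div_assoc', div_le_div_iff₀ (by positivity) hlam1]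
    nlinarith
  have hx10pos : x1 0 ≠ 0 := by linarith [(abs_le.1 hx10).1]
  have hexponent : |lam2 / lam1 * log (x1 t / x1 0)| ≤ log 2 := calc
    _ = lam2 / lam1 * |log (x1 t / x1 0)| := by
      rw [abs_mul, abs_of_nonneg (div_nonneg hlam2 hlam1.le)]
    _ ≤ lam2 / lam1 * (3 * ((lam1 - mu1) / (8 * (lam1 + lam2))) / ((lam1 - mu1) / lam1)) :=
      mul_le_mul_of_nonneg_left (abs_log_div_le_of_abs_sub_le hA hδ hx1t hx10)
        (div_nonneg hlam2 hlam1.le)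
    _ = 3 / 8 * (lam2 / (lam1 + lam2)) := by field_simp
    _ ≤ 3 / 8 * 1 := by gcongr; exact div_le_one_of_le₀ (by linarith) (by positivity)
    _ ≤ log 2 := by linarith [log_two_gt_d9]
  obtain ⟨hlo, hhi⟩ := inv_le_exp_and_exp_le_of_abs_le_log two_pos hexponent
  have hdecay : 0 ≤ x2 0 * exp (-t * (lam1 - mu1)) := by positivity
  rw [h.snd_eq_of_repeated_eigenvalue hlam1.ne' heq hx10pos t]
  constructor <;> nlinarith

theorem abs_fst_sub_le (h : IsSISCompetitionSolution lam1 lam2 mu1 mu2 x1 x2)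
    (hlam1 : 0 < lam1) (hlam2 : 0 ≤ lam2) (hlt : mu1 < lam1)
    (heq : lam1 - mu1 = mu2 - lam2 * mu1 / lam1) (hx2 : ∀ t, 0 ≤ x2 t)
    (hy0 : max |x1 0 - (lam1 - mu1) / lam1| (x2 0) ≤ (lam1 - mu1) / (32 * (lam1 + lam2)))
    {t : ℝ} (ht : 0 ≤ t) :
    |x1 t - (lam1 - mu1) / lam1| ≤ (lam1 - mu1) / (8 * (lam1 + lam2)) := by
  set A := (lam1 - mu1) / lam1 with hA
  set δ := (lam1 - mu1) / (8 * (lam1 + lam2)) with hδ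
  have he : 0 < lam1 - mu1 := sub_pos.2 hlt
  have hδ0 : 0 < δ := by positivity
  have hδA : δ < A := by
    rw [hδ, hA, div_lt_div_iff₀ (by positivity) hlam1]
    nlinarith
  have hquarter : (lam1 - mu1) / (32 * (lam1 + lam2)) = δ / 4 := by
    rw [hδ, div_div]; ring_nf
  have hx10 : |x1 0 - A| ≤ δ := by linarith [le_max_left |x1 0 - A| (x2 0)]
  have hx20 : x2 0 ≤ δ / 4 := by linarith [le_max_right |x1 0 - A| (x2 0)]
  suffices hsq : (x1 t - A) ^ 2 ≤ δ ^ 2 by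
    simpa [abs_of_pos hδ0] using sq_le_sq.1 hsq
  refine image_le_of_deriv_right_lt_deriv_boundary (a := 0)
    (f := fun s => (x1 s - A) ^ 2) (B := fun _ => δ ^ 2) (B' := fun _ => 0)
    (f' := fun s => 2 * (x1 s - A) * (lam1 * x1 s * (1 - x1 s - x2 s) - mu1 * x1 s))
    ((h.continuous_fst.sub continuous_const).pow 2).continuousOn
    (fun s _ => (((h.hasDerivAt_fst s).sub_const A).pow 2).hasDerivWithinAt.congr_deriv
      (by simp))
    (sq_le_sq.2 (by rwa [abs_of_pos hδ0])) (fun _ => hasDerivAt_const _ _) ?_ ⟨ht, le_rfl⟩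
  intro s ⟨hs, _⟩ hboundary
  have hx1s : |x1 s - A| ≤ δ := by simpa [abs_of_pos hδ0] using sq_le_sq.1 hboundary.le
  have hx2s : x2 s ≤ δ / 2 := by
    have hdecay : exp (-s * (lam1 - mu1)) ≤ 1 := exp_le_one_iff.2 (by nlinarith)
    have := (h.snd_bounds_of_abs_fst_sub_le hlam1 hlam2 hlt heq (hx2 0) hx10 hx1s).2
    nlinarith [hx2 0]
  have hrate : lam1 * x1 s * (1 - x1 s - x2 s) - mu1 * x1 s
      = -lam1 * x1 s * ((x1 s - A) + x2 s) := by
    rw [hA]; field_simp; ring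
  have hx1pos : 0 < x1 s := by linarith [(abs_le.1 hx1s).1]
  have hinward : δ ^ 2 / 2 ≤ (x1 s - A) * ((x1 s - A) + x2 s) := by
    nlinarith [mul_le_mul_of_nonneg_right (abs_le.1 hx1s).1 (hx2 s)]
  have hpos : 0 < lam1 * x1 s * ((x1 s - A) * ((x1 s - A) + x2 s)) :=
    mul_pos (mul_pos hlam1 hx1pos) (lt_of_lt_of_le (by positivity) hinward)
  simp only [hrate]
  linarith [show 2 * (x1 s - A) * (-lam1 * x1 s * ((x1 s - A) + x2 s))
    = -2 * (lam1 * x1 s * ((x1 s - A) * ((x1 s - A) + x2 s))) by ring]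

end IsSISCompetitionSolution

theorem sis_repeated_eigenvalue_second_component_bounds_general
    (lam1 lam2 mu1 mu2 : ℝ)
    (hlam2 : 0 < lam2) (hmu1 : 0 < mu1) (hlt : mu1 < lam1)
    (heq : lam1 - mu1 = mu2 - lam2 * mu1 / lam1)
    (x1 x2 : ℝ → ℝ) (hx2nn : ∀ t : ℝ, 0 ≤ x2 t)
    (hode1 : ∀ t : ℝ, HasDerivAt x1 (lam1 * x1 t * (1 - x1 t - x2 t) - mu1 * x1 t) t)
    (hode2 : ∀ t : ℝ, HasDerivAt x2 (lam2 * x2 t * (1 - x1 t - x2 t) - mu2 * x2 t) t)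
    (hy0 : max |x1 0 - (lam1 - mu1) / lam1| (x2 0) ≤ (lam1 - mu1) / (32 * (lam1 + lam2))) :
    ∀ t : ℝ, 0 ≤ t →
      (1 / 2) * x2 0 * Real.exp (-t * (lam1 - mu1)) ≤ x2 t ∧
      x2 t ≤ 2 * x2 0 * Real.exp (-t * (lam1 - mu1)) := by
  intro t ht
  have hlam1 : 0 < lam1 := hmu1.trans hlt
  have h : IsSISCompetitionSolution lam1 lam2 mu1 mu2 x1 x2 := ⟨hode1, hode2⟩
  exact h.snd_bounds_of_abs_fst_sub_le hlam1 hlam2.le hlt heq (hx2nn 0)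
    (h.abs_fst_sub_le hlam1 hlam2.le hlt heq hx2nn hy0 le_rfl)
    (h.abs_fst_sub_le hlam1 hlam2.le hlt heq hx2nn hy0 ht)

/-- Two-sided bounds on the second component in the repeated-eigenvalue case `η₁ = η₂`:
if `y(0) = max{|x₁(0) - (λ₁-μ₁)/λ₁|, x₂(0)} ≤ (λ₁-μ₁)/(32(λ₁+λ₂))` then for all `t ≥ 0`,
`½ x₂(0) e^{-t(λ₁-μ₁)} ≤ x₂(t) ≤ 2 x₂(0) e^{-t(λ₁-μ₁)}`. -/
theorem sis_repeated_eigenvalue_second_component_bounds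
    (lam1 lam2 mu1 mu2 : ℝ)
    (hlam2 : 0 < lam2) (hmu2 : 0 < mu2) (hmu1 : 0 < mu1) (hlt : mu1 < lam1)
    (heq : lam1 - mu1 = mu2 - lam2 * mu1 / lam1)
    (x1 x2 : ℝ → ℝ) (hx2nn : ∀ t : ℝ, 0 ≤ x2 t)
    (hode1 : ∀ t : ℝ, HasDerivAt x1 (lam1 * x1 t * (1 - x1 t - x2 t) - mu1 * x1 t) t)
    (hode2 : ∀ t : ℝ, HasDerivAt x2 (lam2 * x2 t * (1 - x1 t - x2 t) - mu2 * x2 t) t)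
    (hy0 : max |x1 0 - (lam1 - mu1) / lam1| (x2 0) ≤ (lam1 - mu1) / (32 * (lam1 + lam2))) :
    ∀ t : ℝ, 0 ≤ t →
      (1 / 2) * x2 0 * Real.exp (-t * (lam1 - mu1)) ≤ x2 t ∧
      x2 t ≤ 2 * x2 0 * Real.exp (-t * (lam1 - mu1)) :=
  sis_repeated_eigenvalue_second_component_bounds_general lam1 lam2 mu1 mu2 hlam2 hmu1 hlt heq x1 x2
    hx2nn hode1 hode2 hy0
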